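/- (Characterization C0 of GLS.) A formula φ is a theorem of the Hilbert system GLS if and only if for every GL-model ⟨W,R,V⟩ and every world w ∈ W that is SF(φ)-reflexive (i.e., V(w, □α → α)=true for every subformula of φ of the form □α), V(w, φ) = true. -/

import Mathlib

/-- Modal formulas: propositional variables, ⊥, →, □. -/
inductive Formula : Type
  | var : ℕ → Formula
  | bot : Formula
  | imp : Formula → Formula → Formula
  | box : Formula → Formula
deriving DecidableEq

/-- Levels of sequents in GLS_seq: first level (⇒) and second level (⇛). -/
inductive SeqLevel : Type
  | one
  | two
deriving DecidableEq

/-- The set of subformulas of a formula. -/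
def Formula.subf : Formula → Finset Formula
  | .var p => {.var p}
  | .bot => {.bot}
  | .imp φ ψ => insert (.imp φ ψ) (φ.subf ∪ ψ.subf)
  | .box φ => insert (.box φ) φ.subf

/-- SF(Ψ,Φ): all subformulas of formulas in Ψ ∪ Φ. -/
def SF (Ψ Φ : Finset Formula) : Finset Formula := (Ψ ∪ Φ).biUnion Formula.subf

def Formula.isBox : Formula → Bool
  | .box _ => true
  | _ => false

def Formula.unbox : Formula → Formula
  | .box φ => φ
  | φ => φ

/-- Θ_□ = {φ : □φ ∈ Θ}. -/
def boxInv (Θ : Finset Formula) : Finset Formula :=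
  (Θ.filter fun ψ => ψ.isBox).image Formula.unbox

/-- The sequent calculus GLS_seq, on sequents of two levels.  The Bool parameter
records whether the cut rule may be used: `GLSSeq true` is provability in GLS_seq,
`GLSSeq false` is cut-free provability.  The first-level fragment is exactly GL_seq. -/
inductive GLSSeq : Bool → SeqLevel → Finset Formula → Finset Formula → Prop
  | init (c lv φ) : GLSSeq c lv {φ} {φ}
  | initBot (c lv) : GLSSeq c lv {Formula.bot} ∅
  | cut {lv Γ Δ} (φ) : GLSSeq true lv Γ (insert φ Δ) → GLSSeq true lv (insert φ Γ) Δ →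
      GLSSeq true lv Γ Δ
  | weak {c lv Γ Δ Γ' Δ'} : Γ ⊆ Γ' → Δ ⊆ Δ' → GLSSeq c lv Γ Δ → GLSSeq c lv Γ' Δ'
  | impL {c lv Γ Δ φ ψ} : GLSSeq c lv Γ (insert φ Δ) → GLSSeq c lv (insert ψ Γ) Δ →
      GLSSeq c lv (insert (.imp φ ψ) Γ) Δ
  | impR {c lv Γ Δ φ ψ} : GLSSeq c lv (insert φ Γ) (insert ψ Δ) →
      GLSSeq c lv Γ (insert (.imp φ ψ) Δ)
  | boxGL {c Γ φ} : GLSSeq c .one (Γ ∪ Γ.image .box ∪ {.box φ}) {φ} →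
      GLSSeq c .one (Γ.image .box) {.box φ}
  | boxL {c Γ Δ} (φ) : GLSSeq c .two (insert φ Γ) Δ → GLSSeq c .two (insert (.box φ) Γ) Δ
  | lift {c Γ Δ} : GLSSeq c .one Γ Δ → GLSSeq c .two Γ Δ

/-- The sequent calculus GL_seq (on first-level sequents only). -/
inductive GLSeq : Bool → Finset Formula → Finset Formula → Prop
  | init (c φ) : GLSeq c {φ} {φ}
  | initBot (c) : GLSeq c {Formula.bot} ∅
  | cut {Γ Δ} (φ) : GLSeq true Γ (insert φ Δ) → GLSeq true (insert φ Γ) Δ → GLSeq true Γ Δ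
  | weak {c Γ Δ Γ' Δ'} : Γ ⊆ Γ' → Δ ⊆ Δ' → GLSeq c Γ Δ → GLSeq c Γ' Δ'
  | impL {c Γ Δ φ ψ} : GLSeq c Γ (insert φ Δ) → GLSeq c (insert ψ Γ) Δ →
      GLSeq c (insert (.imp φ ψ) Γ) Δ
  | impR {c Γ Δ φ ψ} : GLSeq c (insert φ Γ) (insert ψ Δ) → GLSeq c Γ (insert (.imp φ ψ) Δ)
  | boxGL {c Γ φ} : GLSeq c (Γ ∪ Γ.image .box ∪ {.box φ}) {φ} → GLSeq c (Γ.image .box) {.box φ}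

/-- Proof trees of GLS_seq (cut included). -/
inductive GLSTree : SeqLevel → Finset Formula → Finset Formula → Type
  | init (lv φ) : GLSTree lv {φ} {φ}
  | initBot (lv) : GLSTree lv {Formula.bot} ∅
  | cut {lv Γ Δ} (φ) : GLSTree lv Γ (insert φ Δ) → GLSTree lv (insert φ Γ) Δ → GLSTree lv Γ Δ
  | weak {lv Γ Δ} (Γ' Δ' : Finset Formula) : Γ ⊆ Γ' → Δ ⊆ Δ' → GLSTree lv Γ Δ → GLSTree lv Γ' Δ'
  | impL {lv Γ Δ} (φ ψ) : GLSTree lv Γ (insert φ Δ) → GLSTree lv (insert ψ Γ) Δ →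
      GLSTree lv (insert (.imp φ ψ) Γ) Δ
  | impR {lv Γ Δ} (φ ψ) : GLSTree lv (insert φ Γ) (insert ψ Δ) → GLSTree lv Γ (insert (.imp φ ψ) Δ)
  | boxGL (Γ φ) : GLSTree .one (Γ ∪ Γ.image .box ∪ {.box φ}) {φ} → GLSTree .one (Γ.image .box) {.box φ}
  | boxL {Γ Δ} (φ) : GLSTree .two (insert φ Γ) Δ → GLSTree .two (insert (.box φ) Γ) Δ
  | lift {Γ Δ} : GLSTree .one Γ Δ → GLSTree .two Γ Δ

/-- The set of principal formulas of all (□L) rules occurring in a proof tree. -/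
def GLSTree.principals : ∀ {lv Γ Δ}, GLSTree lv Γ Δ → Finset Formula
  | _, _, _, .init _ _ => ∅
  | _, _, _, .initBot _ => ∅
  | _, _, _, .cut _ t₁ t₂ => t₁.principals ∪ t₂.principals
  | _, _, _, .weak _ _ _ _ t => t.principals
  | _, _, _, .impL _ _ t₁ t₂ => t₁.principals ∪ t₂.principals
  | _, _, _, .impR _ _ t => t.principals
  | _, _, _, .boxGL _ _ t => t.principals
  | _, _, _, .boxL φ t => insert (Formula.box φ) t.principals
  | _, _, _, .lift t => t.principals

/-- A proof tree bundled with its level and conclusion. -/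
abbrev PGLSTree : Type :=
  (lv : SeqLevel) × (Γ : Finset Formula) × (Δ : Finset Formula) × GLSTree lv Γ Δ

/-- The set of subproofs of a proof tree (including the tree itself). -/
def GLSTree.subproofs {lv Γ Δ} (t : GLSTree lv Γ Δ) : Set PGLSTree :=
  insert ⟨lv, Γ, Δ, t⟩ <|
    match lv, Γ, Δ, t with
    | _, _, _, .init _ _ => ∅
    | _, _, _, .initBot _ => ∅
    | _, _, _, .cut _ t₁ t₂ => t₁.subproofs ∪ t₂.subproofs
    | _, _, _, .weak _ _ _ _ t₁ => t₁.subproofs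
    | _, _, _, .impL _ _ t₁ t₂ => t₁.subproofs ∪ t₂.subproofs
    | _, _, _, .impR _ _ t₁ => t₁.subproofs
    | _, _, _, .boxGL _ _ t₁ => t₁.subproofs
    | _, _, _, .boxL _ t₁ => t₁.subproofs
    | _, _, _, .lift t₁ => t₁.subproofs

/-- Kripke satisfaction over a frame `R` with atomic valuation `v`. -/
def KSat {W : Type} (R : W → W → Prop) (v : W → ℕ → Prop) : Formula → W → Prop
  | .var p, w => v w p
  | .bot, _ => False
  | .imp φ ψ, w => KSat R v φ w → KSat R v ψ w
  | .box φ, w => ∀ w', R w w' → KSat R v φ w'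

/-- A GL-model: a nonempty, transitive, converse well-founded Kripke model. -/
structure GLModel where
  World : Type
  ne : Nonempty World
  R : World → World → Prop
  trans : Transitive R
  cwf : ∀ f : ℕ → World, ¬ ∀ i, R (f i) (f (i + 1))
  val : World → ℕ → Prop

/-- Truth of a formula at a world of a GL-model. -/
def GLModel.sat (M : GLModel) (w : M.World) (φ : Formula) : Prop := KSat M.R M.val φ w

/-- Truth of a sequent Γ ▸ Δ at a world: some γ ∈ Γ is false or some δ ∈ Δ is true. -/
def GLModel.seqTrue (M : GLModel) (w : M.World) (Γ Δ : Finset Formula) : Prop :=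
  (∃ γ ∈ Γ, ¬ M.sat w γ) ∨ (∃ δ ∈ Δ, M.sat w δ)

/-- w is Σ-reflexive: □α → α is true at w for every □α ∈ Σ. -/
def GLModel.reflexiveFor (M : GLModel) (w : M.World) (S : Finset Formula) : Prop :=
  ∀ α : Formula, Formula.box α ∈ S → M.sat w ((Formula.box α).imp α)

/-- Saturation conditions (→L), (→R) for first-level sequents. -/
def Saturated1 (Γ Δ : Finset Formula) : Prop :=
  (∀ φ ψ : Formula, φ.imp ψ ∈ Γ → φ ∈ Δ ∨ ψ ∈ Γ) ∧
  (∀ φ ψ : Formula, φ.imp ψ ∈ Δ → φ ∈ Γ ∧ ψ ∈ Δ)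

/-- Saturation for second-level sequents: additionally (□L). -/
def Saturated2 (Γ Δ : Finset Formula) : Prop :=
  Saturated1 Γ Δ ∧ ∀ φ : Formula, Formula.box φ ∈ Γ → φ ∈ Γ

def Saturated : SeqLevel → Finset Formula → Finset Formula → Prop
  | .one => Saturated1
  | .two => Saturated2

/-- The Hilbert system GL. -/
inductive GLHilbert : Formula → Prop
  | ax1 (φ ψ : Formula) : GLHilbert (φ.imp (ψ.imp φ))
  | ax2 (φ ψ χ : Formula) :
      GLHilbert ((φ.imp (ψ.imp χ)).imp ((φ.imp ψ).imp (φ.imp χ)))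
  | ax3 (φ : Formula) : GLHilbert (((φ.imp .bot).imp .bot).imp φ)
  | axK (φ ψ : Formula) :
      GLHilbert ((Formula.box (φ.imp ψ)).imp ((Formula.box φ).imp (Formula.box ψ)))
  | axLob (φ : Formula) :
      GLHilbert ((Formula.box ((Formula.box φ).imp φ)).imp (Formula.box φ))
  | mp {φ ψ} : GLHilbert (φ.imp ψ) → GLHilbert φ → GLHilbert ψ
  | nec {φ} : GLHilbert φ → GLHilbert (Formula.box φ)

/-- The Hilbert system GLS: theorems of GL and all □α → α, closed under modus ponens. -/
inductive GLSHilbert : Formula → Prop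
  | gl {φ} : GLHilbert φ → GLSHilbert φ
  | refl (α : Formula) : GLSHilbert ((Formula.box α).imp α)
  | mp {φ ψ} : GLSHilbert (φ.imp ψ) → GLSHilbert φ → GLSHilbert ψ

/-- Conjunction (encoded with → and ⊥) of a list of formulas; empty conjunction is ⊤. -/
def Formula.conj : List Formula → Formula
  | [] => Formula.bot.imp Formula.bot
  | φ :: l => ((φ.imp ((Formula.conj l).imp .bot)).imp .bot)

/-- Membership predicate for the canonical model: saturated first-level sequents over S
that are not cut-free provable in GLS_seq. -/
def W0pred (S : Finset Formula) (s : Finset Formula × Finset Formula) : Prop :=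
  Saturated1 s.1 s.2 ∧ ¬ GLSSeq false SeqLevel.one s.1 s.2 ∧ s.1 ∪ s.2 ⊆ S

/-- Worlds of the canonical model. -/
def W0 (S : Finset Formula) : Type := {s : Finset Formula × Finset Formula // W0pred S s}

/-- Accessibility of the canonical model: (Γ⇒Δ) R₀ (Γ'⇒Δ') iff Γ_□ ⊊ Γ'_□ and Γ_□ ⊆ Γ'. -/
def R0 (S : Finset Formula) (s t : W0 S) : Prop :=
  boxInv s.1.1 ⊂ boxInv t.1.1 ∧ boxInv s.1.1 ⊆ t.1.1

/-- Valuation of the canonical model: p is true at (Γ⇒Δ) iff p ∈ Γ. -/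
def V0 (S : Finset Formula) (s : W0 S) (p : ℕ) : Prop := Formula.var p ∈ s.1.1

/-- The extended set of worlds W = W₀ ∪ ℕ. -/
def Wext (S : Finset Formula) : Type := W0 S ⊕ ℕ

/-- The extended accessibility relation, with distinguished world `wp` in W₀. -/
def Rext (S : Finset Formula) (wp : W0 S) : Wext S → Wext S → Prop
  | Sum.inl x, Sum.inl y => R0 S x y
  | Sum.inr _, Sum.inl y => y = wp ∨ R0 S wp y
  | Sum.inr n, Sum.inr m => m < n
  | Sum.inl _, Sum.inr _ => False

/-- The extended valuation: worlds in ℕ behave like the distinguished world `wp`. -/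
def Vext (S : Finset Formula) (wp : W0 S) : Wext S → ℕ → Prop
  | Sum.inl x, p => V0 S x p
  | Sum.inr _, p => V0 S wp p

/-!
A GLS-theorem is GL-derivable from finitely many reflexivity axioms `□α → α`. Below an
SF(φ)-reflexive world `w` attach an infinite chain `⋯ → 2 → 1 → 0 → w` of copies of `w`.
Reflexivity of `w` makes every subformula of `φ` take the same value at each copy as at `w`.
Along the chain `□α` can only go from true to false, so far enough down `□α → α` holds for any
finitely many `α`; by soundness of GL, `φ` holds there, hence at `w`.

Conversely, if `φ` is not a GLS-theorem, `¬φ` together with `□α → α` for `□α ∈ SF(φ)` is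
GL-consistent, hence true at a world of the finite canonical model over its subformulas.
-/

open Formula Filter

namespace Formula

abbrev neg (φ : Formula) : Formula := φ.imp .bot

def and (φ ψ : Formula) : Formula := (φ.imp ψ.neg).neg

theorem mem_subf_self : ∀ φ : Formula, φ ∈ φ.subf
  | .var _ | .bot | .imp _ _ | .box _ => by simp [subf]

theorem subf_imp_left (φ ψ : Formula) : φ.subf ⊆ (φ.imp ψ).subf :=
  fun _ h => by simp [subf, h]

theorem subf_imp_right (φ ψ : Formula) : ψ.subf ⊆ (φ.imp ψ).subf :=
  fun _ h => by simp [subf, h]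

theorem subf_box (φ : Formula) : φ.subf ⊆ φ.box.subf :=
  fun _ h => by simp [subf, h]

theorem subf_subset_of_mem {φ ψ : Formula} (h : ψ ∈ φ.subf) : ψ.subf ⊆ φ.subf := by
  induction φ with
  | var | bot => simp only [subf, Finset.mem_singleton] at h; rw [h]
  | imp a b iha ihb =>
    simp only [subf, Finset.mem_insert, Finset.mem_union] at h
    rcases h with rfl | h | h
    · rfl
    · exact (iha h).trans (subf_imp_left a b)
    · exact (ihb h).trans (subf_imp_right a b)
  | box a ih =>
    simp only [subf, Finset.mem_insert] at h
    rcases h with rfl | h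
    · rfl
    · exact (ih h).trans (subf_box a)

end Formula

theorem mem_boxInv {Θ : Finset Formula} {φ : Formula} : φ ∈ boxInv Θ ↔ φ.box ∈ Θ := by
  simp only [boxInv, Finset.mem_image, Finset.mem_filter]
  constructor
  · rintro ⟨ψ, ⟨hψ, hbox⟩, rfl⟩
    cases ψ <;> simp_all [isBox, unbox]
  · exact fun h => ⟨φ.box, ⟨h, rfl⟩, rfl⟩

inductive GLDeriv (Γ : Finset Formula) : Formula → Prop
  | thm {φ} : GLHilbert φ → GLDeriv Γ φ
  | hyp {φ} : φ ∈ Γ → GLDeriv Γ φ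
  | mp {φ ψ} : GLDeriv Γ (φ.imp ψ) → GLDeriv Γ φ → GLDeriv Γ ψ

theorem GLHilbert.imp_self (φ : Formula) : GLHilbert (φ.imp φ) :=
  .mp (.mp (.ax2 φ (φ.imp φ) φ) (.ax1 φ (φ.imp φ))) (.ax1 φ φ)

namespace GLDeriv

variable {Γ Δ : Finset Formula} {φ ψ : Formula}

theorem trans (h : GLDeriv Γ φ) (hΓ : ∀ γ ∈ Γ, GLDeriv Δ γ) : GLDeriv Δ φ := by
  induction h with
  | thm h => exact .thm h
  | hyp h => exact hΓ _ h
  | mp _ _ ih₁ ih₂ => exact .mp ih₁ ih₂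

theorem mono (h : GLDeriv Γ φ) (hΓ : Γ ⊆ Δ) : GLDeriv Δ φ :=
  h.trans fun _ hγ => .hyp (hΓ hγ)

theorem deduction (h : GLDeriv (insert φ Γ) ψ) : GLDeriv Γ (φ.imp ψ) := by
  induction h with
  | thm h => exact .mp (.thm (.ax1 _ _)) (.thm h)
  | hyp h =>
    rcases Finset.mem_insert.1 h with rfl | h
    · exact .thm (.imp_self _)
    · exact .mp (.thm (.ax1 _ _)) (.hyp h)
  | mp _ _ ih₁ ih₂ => exact .mp (.mp (.thm (.ax2 _ _ _)) ih₁) ih₂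

theorem of_bot (h : GLDeriv Γ .bot) : GLDeriv Γ φ :=
  .mp (.thm (.ax3 φ)) (.mp (.thm (.ax1 _ _)) h)

theorem of_neg_neg (h : GLDeriv Γ φ.neg.neg) : GLDeriv Γ φ :=
  .mp (.thm (.ax3 φ)) h

theorem box (h : GLDeriv Γ φ) (hΓ : ∀ γ ∈ Γ, GLDeriv Δ γ.box) : GLDeriv Δ φ.box := by
  induction h with
  | thm h => exact .thm (.nec h)
  | hyp h => exact hΓ _ h
  | mp _ _ ih₁ ih₂ => exact .mp (.mp (.thm (.axK _ _)) ih₁) ih₂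

theorem and_intro (hφ : GLDeriv Γ φ) (hψ : GLDeriv Γ ψ) : GLDeriv Γ (φ.and ψ) :=
  deduction (.mp (.mp (.hyp (Finset.mem_insert_self _ _)) (hφ.mono (Finset.subset_insert _ _)))
    (hψ.mono (Finset.subset_insert _ _)))

theorem and_left (h : GLDeriv Γ (φ.and ψ)) : GLDeriv Γ φ := by
  refine of_neg_neg (deduction (.mp (h.mono (Finset.subset_insert _ _)) (deduction (of_bot ?_))))
  exact .mp (.hyp (by simp)) (.hyp (Finset.mem_insert_self _ _))

theorem and_right (h : GLDeriv Γ (φ.and ψ)) : GLDeriv Γ ψ :=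
  of_neg_neg (deduction (.mp (h.mono (Finset.subset_insert _ _))
    (.mp (.thm (.ax1 _ _)) (.hyp (Finset.mem_insert_self _ _)))))

/-- Axiom 4, via Löb's axiom applied to `φ ∧ □φ`. -/
theorem box_box (h : GLDeriv Γ φ.box) : GLDeriv Γ φ.box.box := by
  set χ := φ.and φ.box
  have hχφ : GLDeriv {χ} φ := and_left (.hyp (Finset.mem_singleton_self χ))
  have hχbox : GLDeriv {χ} φ.box := and_right (.hyp (Finset.mem_singleton_self χ))
  have hlob : GLDeriv {φ} (χ.box.imp χ) :=
    deduction (and_intro (.hyp (by simp)) (hχφ.box (by simpa using .hyp (by simp))))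
  have hχ : GLDeriv Γ χ.box := .mp (.thm (.axLob χ)) (hlob.box (by simpa using h))
  exact hχbox.box (by simpa using hχ)

end GLDeriv

theorem not_exists_chain_iff_wellFounded_flip {α : Type*} {r : α → α → Prop} :
    (∀ f : ℕ → α, ¬ ∀ i, r (f i) (f (i + 1))) ↔ WellFounded (flip r) := by
  rw [wellFounded_iff_isEmpty_descending_chain, isEmpty_subtype]
  rfl

theorem GLModel.wellFounded_flip_R (M : GLModel) : WellFounded (flip M.R) :=
  not_exists_chain_iff_wellFounded_flip.1 M.cwf

theorem GLHilbert.sound {φ : Formula} (h : GLHilbert φ) (M : GLModel) (w : M.World) :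
    M.sat w φ := by
  induction h generalizing w with
  | ax1 => exact fun h _ => h
  | ax2 => exact fun h₁ h₂ h₃ => h₁ h₃ (h₂ h₃)
  | ax3 => exact fun h => by_contra h
  | axK => exact fun h₁ h₂ w' hw' => h₁ w' hw' (h₂ w' hw')
  | axLob φ =>
    intro hlob x
    refine M.wellFounded_flip_R.induction (C := fun x => M.R w x → M.sat x φ) x ?_
    exact fun x ih hwx => hlob x hwx fun y hxy => ih y hxy (M.trans hwx hxy)
  | mp _ _ ih₁ ih₂ => exact ih₁ w (ih₂ w)
  | nec _ ih => exact fun w' _ => ih w'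

theorem GLDeriv.sound {Γ : Finset Formula} {φ : Formula} (h : GLDeriv Γ φ) {M : GLModel}
    {w : M.World} (hΓ : ∀ γ ∈ Γ, M.sat w γ) : M.sat w φ := by
  induction h with
  | thm h => exact h.sound M w
  | hyp h => exact hΓ _ h
  | mp _ _ ih₁ ih₂ => exact ih₁ ih₂

def reflAxioms (A : Finset Formula) : Finset Formula :=
  A.image fun α => α.box.imp α

namespace GLSHilbert

theorem exists_glDeriv_reflAxioms {φ : Formula} (h : GLSHilbert φ) :
    ∃ A, GLDeriv (reflAxioms A) φ := by
  induction h with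
  | gl h => exact ⟨∅, .thm h⟩
  | refl α => exact ⟨{α}, .hyp (by simp [reflAxioms])⟩
  | mp _ _ ih₁ ih₂ =>
    obtain ⟨A, hA⟩ := ih₁
    obtain ⟨B, hB⟩ := ih₂
    exact ⟨A ∪ B, .mp (hA.mono (Finset.image_subset_image Finset.subset_union_left))
      (hB.mono (Finset.image_subset_image Finset.subset_union_right))⟩

theorem of_glDeriv_reflAxioms {A : Finset Formula} {φ : Formula}
    (h : GLDeriv (reflAxioms A) φ) : GLSHilbert φ := by
  induction h with
  | thm h => exact .gl h
  | hyp h =>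
    obtain ⟨α, -, rfl⟩ := Finset.mem_image.1 h
    exact .refl α
  | mp _ _ ih₁ ih₂ => exact .mp ih₁ ih₂

end GLSHilbert

namespace GLModel

variable (M : GLModel) (w : M.World)

def tailRel : M.World ⊕ ℕ → M.World ⊕ ℕ → Prop
  | .inl x, .inl y => M.R x y
  | .inr _, .inl y => y = w ∨ M.R w y
  | .inr n, .inr m => m < n
  | .inl _, .inr _ => False

theorem wellFounded_flip_tailRel : WellFounded (flip (M.tailRel w)) :=
  Subrelation.wf (r := Sum.Lex (flip M.R) (· < ·))
    (fun {a b} h => by cases a <;> cases b <;> simp_all [flip, tailRel])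
    (Sum.lex_wf M.wellFounded_flip_R wellFounded_lt)

def tail : GLModel where
  World := M.World ⊕ ℕ
  ne := ⟨.inr 0⟩
  R := M.tailRel w
  trans := by
    rintro (a | a) (b | b) (c | c) hab hbc
    all_goals simp only [tailRel] at hab hbc ⊢
    · exact M.trans hab hbc
    · rcases hab with rfl | hab
      · exact Or.inr hbc
      · exact Or.inr (M.trans hab hbc)
    · exact hbc
    · exact hbc.trans hab
  cwf := not_exists_chain_iff_wellFounded_flip.2 (M.wellFounded_flip_tailRel w)
  val
    | .inl x => M.val x
    | .inr _ => M.val w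

theorem sat_tail_inl (φ : Formula) (x : M.World) :
    (M.tail w).sat (.inl x) φ ↔ M.sat x φ := by
  induction φ generalizing x with
  | var | bot => rfl
  | imp φ ψ ihφ ihψ => exact imp_congr (ihφ x) (ihψ x)
  | box φ ih =>
    refine ⟨fun h y hxy => (ih y).1 (h (.inl y) hxy), fun h y hxy => ?_⟩
    rcases y with y | n
    · exact (ih y).2 (h y hxy)
    · exact hxy.elim

theorem sat_tail_inr {S : Finset Formula} (hw : M.reflexiveFor w S) {φ : Formula}
    (hφ : φ.subf ⊆ S) (n : ℕ) : (M.tail w).sat (.inr n) φ ↔ M.sat w φ := by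
  induction φ generalizing n with
  | var | bot => rfl
  | imp φ ψ ihφ ihψ =>
    exact imp_congr (ihφ ((subf_imp_left φ ψ).trans hφ) n)
      (ihψ ((subf_imp_right φ ψ).trans hφ) n)
  | box φ ih =>
    refine ⟨fun h y hwy => (M.sat_tail_inl w φ y).1 (h (.inl y) (Or.inr hwy)), fun h => ?_⟩
    have hφw : M.sat w φ := hw φ (hφ (mem_subf_self _)) h
    rintro (y | m) hny
    · rcases hny with hyw | hwy
      · exact hyw ▸ (M.sat_tail_inl w φ w).2 hφw
      · exact (M.sat_tail_inl w φ y).2 (h y hwy)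
    · exact (ih ((subf_box φ).trans hφ) m).2 hφw

theorem sat_tail_inr_box_antitone (φ : Formula) :
    Antitone fun n => (M.tail w).sat (.inr n) φ.box := by
  intro m n hmn h
  rintro (y | k) hmy
  · exact h (.inl y) hmy
  · exact h (.inr k) (lt_of_lt_of_le hmy hmn)

theorem eventually_sat_tail_inr_reflAxiom (α : Formula) :
    ∀ᶠ n in atTop, (M.tail w).sat (.inr n) (α.box.imp α) := by
  by_cases h : ∀ n, (M.tail w).sat (.inr n) α.box
  · exact Eventually.of_forall fun n _ => h (n + 1) (.inr n) n.lt_succ_self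
  · push Not at h
    obtain ⟨n₀, hn₀⟩ := h
    exact eventually_atTop.2 ⟨n₀, fun n hn hbox =>
      (hn₀ (M.sat_tail_inr_box_antitone w α hn hbox)).elim⟩

end GLModel

theorem GLSHilbert.sat_of_reflexiveFor {φ : Formula} (h : GLSHilbert φ) {M : GLModel}
    {w : M.World} (hw : M.reflexiveFor w φ.subf) : M.sat w φ := by
  obtain ⟨A, hA⟩ := h.exists_glDeriv_reflAxioms
  obtain ⟨N, hN⟩ := ((eventually_all_finset A).2 fun α _ =>
    M.eventually_sat_tail_inr_reflAxiom w α).exists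
  have hφN : (M.tail w).sat (.inr N) φ := hA.sound fun γ hγ => by
    obtain ⟨α, hα, rfl⟩ := Finset.mem_image.1 hγ
    exact hN α hα
  exact (M.sat_tail_inr w hw subset_rfl N).1 hφN

def GLConsistent (Γ : Finset Formula) : Prop := ¬ GLDeriv Γ .bot

theorem GLConsistent.anti {Γ Δ : Finset Formula} (h : GLConsistent Δ) (hΓ : Γ ⊆ Δ) :
    GLConsistent Γ :=
  fun hΓbot => h (hΓbot.mono hΓ)

theorem GLConsistent.insert_or_insert_neg {Γ : Finset Formula} (h : GLConsistent Γ)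
    (φ : Formula) : GLConsistent (insert φ Γ) ∨ GLConsistent (insert φ.neg Γ) := by
  refine or_iff_not_imp_left.2 fun hφ hneg => h ?_
  exact .mp (.deduction hneg) (.deduction (not_not.1 hφ))

namespace Canonical

variable {S : Finset Formula}

def diag (S X : Finset Formula) : Finset Formula := X ∪ (S \ X).image neg

theorem mem_diag_of_mem {X : Finset Formula} {φ : Formula} (h : φ ∈ X) : φ ∈ diag S X :=
  Finset.mem_union_left _ h

theorem neg_mem_diag {X : Finset Formula} {φ : Formula} (hS : φ ∈ S) (hX : φ ∉ X) :
    φ.neg ∈ diag S X :=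
  Finset.mem_union_right _ (Finset.mem_image_of_mem _ (Finset.mem_sdiff.2 ⟨hS, hX⟩))

theorem mem_of_consistent_union {Γ X : Finset Formula} (h : GLConsistent (Γ ∪ diag S X))
    {φ : Formula} (hΓ : φ ∈ Γ) (hS : φ ∈ S) : φ ∈ X := by
  by_contra hX
  exact h (.mp (.hyp (Finset.mem_union_right _ (neg_mem_diag hS hX)))
    (.hyp (Finset.mem_union_left _ hΓ)))

theorem lindenbaum {Γ : Finset Formula} (hΓ : GLConsistent Γ) :
    ∃ X ⊆ S, GLConsistent (Γ ∪ diag S X) := by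
  induction S using Finset.induction generalizing Γ with
  | empty => exact ⟨∅, subset_rfl, by simpa [diag] using hΓ⟩
  | insert φ S _ ih =>
    rcases hΓ.insert_or_insert_neg φ with hφ | hφ <;> obtain ⟨X, hXS, hX⟩ := ih hφ
    · exact ⟨insert φ X, Finset.insert_subset_insert φ hXS,
        hX.anti fun ψ => by
          simp only [diag, Finset.mem_union, Finset.mem_insert, Finset.mem_image, Finset.mem_sdiff]
          aesop⟩
    · exact ⟨X, hXS.trans (Finset.subset_insert φ S),
        hX.anti fun ψ => by
          simp only [diag, Finset.mem_union, Finset.mem_insert, Finset.mem_image, Finset.mem_sdiff]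
          aesop⟩

def World (S : Finset Formula) : Type := {X : Finset Formula // X ⊆ S ∧ GLConsistent (diag S X)}

theorem mem_of_glDeriv (X : World S) {φ : Formula} (h : GLDeriv (diag S X.1) φ) (hS : φ ∈ S) :
    φ ∈ X.1 := by
  by_contra hX
  exact X.2.2 (.mp (.hyp (neg_mem_diag hS hX)) h)

def Rel (S : Finset Formula) (X Y : World S) : Prop := boxInv X.1 ⊂ boxInv Y.1 ∧ boxInv X.1 ⊆ Y.1

theorem card_boxInv_le (X : World S) : (boxInv X.1).card ≤ S.card :=
  Finset.card_image_le.trans ((Finset.card_filter_le _ _).trans (Finset.card_le_card X.2.1))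

def model (S : Finset Formula) [Nonempty (World S)] : GLModel where
  World := World S
  ne := ‹_›
  R := Rel S
  trans := fun _ _ _ hXY hYZ => ⟨hXY.1.trans hYZ.1, hXY.1.subset.trans hYZ.2⟩
  cwf := not_exists_chain_iff_wellFounded_flip.2 <|
    Subrelation.wf (r := InvImage (· < ·) fun X : World S => S.card - (boxInv X.1).card)
      (fun {Y X} hXY => by
        have := Finset.card_lt_card hXY.1
        have := card_boxInv_le Y
        show S.card - _ < S.card - _
        omega)
      (InvImage.wf _ wellFounded_lt)
  val X p := .var p ∈ X.1

/-- Since `□φ ∉ X`, `X` does not prove `□(□φ → φ)` (Löb), so the boxed part of `X` does not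
prove `□φ → φ` (necessitation and axiom 4). -/
theorem consistent_neg_insert_box_boxInv (X : World S) {φ : Formula} (hS : φ.box ∈ S)
    (hX : φ.box ∉ X.1) :
    GLConsistent (insert φ.neg (insert φ.box (boxInv X.1 ∪ (boxInv X.1).image box))) := by
  intro hbot
  have hrefl : GLDeriv (boxInv X.1 ∪ (boxInv X.1).image box) (φ.box.imp φ) :=
    .deduction (.of_neg_neg (.deduction hbot))
  have hbox : GLDeriv (diag S X.1) (φ.box.imp φ).box := by
    refine hrefl.box fun γ hγ => ?_
    rcases Finset.mem_union.1 hγ with hγ | hγ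
    · exact .hyp (mem_diag_of_mem (mem_boxInv.1 hγ))
    · obtain ⟨β, hβ, rfl⟩ := Finset.mem_image.1 hγ
      exact GLDeriv.box_box (.hyp (mem_diag_of_mem (mem_boxInv.1 hβ)))
  exact X.2.2 (.mp (.hyp (neg_mem_diag hS hX)) (.mp (.thm (.axLob φ)) hbox))

theorem exists_rel_not_mem (hS : ∀ ψ ∈ S, ψ.subf ⊆ S) (X : World S) {φ : Formula}
    (hφS : φ.box ∈ S) (hφX : φ.box ∉ X.1) : ∃ Y, Rel S X Y ∧ φ ∉ Y.1 := by
  obtain ⟨Y, hYS, hY⟩ := lindenbaum (consistent_neg_insert_box_boxInv X hφS hφX)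
  set B := boxInv X.1
  have hBS : ∀ β ∈ B, β.box ∈ S := fun β hβ => X.2.1 (mem_boxInv.1 hβ)
  have hBY : B ⊆ Y := fun β hβ => mem_of_consistent_union hY (by simp [hβ])
    (hS _ (hBS β hβ) (subf_box β (mem_subf_self β)))
  have hBboxY : B ⊆ boxInv Y := fun β hβ =>
    mem_boxInv.2 (mem_of_consistent_union hY (by simp [hβ]) (hBS β hβ))
  have hφboxY : φ ∈ boxInv Y := mem_boxInv.2 (mem_of_consistent_union hY (by simp) hφS)
  refine ⟨⟨Y, hYS, hY.anti Finset.subset_union_right⟩,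
    ⟨(Finset.ssubset_iff_of_subset hBboxY).2 ⟨φ, hφboxY, fun h => hφX (mem_boxInv.1 h)⟩, hBY⟩,
    fun hφY => hY (.mp (.hyp (by simp)) (.hyp (Finset.mem_union_right _ (mem_diag_of_mem hφY))))⟩

theorem sat_model_iff [Nonempty (World S)] (hS : ∀ ψ ∈ S, ψ.subf ⊆ S) {φ : Formula}
    (hφ : φ ∈ S) (X : World S) : (model S).sat X φ ↔ φ ∈ X.1 := by
  induction φ generalizing X with
  | var => rfl
  | bot => exact ⟨False.elim, fun h => X.2.2 (.hyp (mem_diag_of_mem h))⟩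
  | imp φ ψ ihφ ihψ =>
    have hφS := hS _ hφ (subf_imp_left φ ψ (mem_subf_self φ))
    have hψS := hS _ hφ (subf_imp_right φ ψ (mem_subf_self ψ))
    refine ⟨fun h => mem_of_glDeriv X ?_ hφ, fun h hφX => (ihψ hψS X).2 ?_⟩
    · by_cases hφX : φ ∈ X.1
      · exact .mp (.thm (.ax1 _ _))
          (.hyp (mem_diag_of_mem ((ihψ hψS X).1 (h ((ihφ hφS X).2 hφX)))))
      · exact .deduction (.of_bot (.mp (.hyp (Finset.mem_insert_of_mem (neg_mem_diag hφS hφX)))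
          (.hyp (Finset.mem_insert_self _ _))))
    · exact mem_of_glDeriv X (.mp (.hyp (mem_diag_of_mem h))
        (.hyp (mem_diag_of_mem ((ihφ hφS X).1 hφX)))) hψS
  | box φ ih =>
    have hφS := hS _ hφ (subf_box φ (mem_subf_self φ))
    refine ⟨fun h => ?_, fun h Y hXY => (ih hφS Y).2 (hXY.2 (mem_boxInv.2 h))⟩
    by_contra hφX
    obtain ⟨Y, hXY, hφY⟩ := exists_rel_not_mem hS X hφ hφX
    exact hφY ((ih hφS Y).1 (h Y hXY))

end Canonical

theorem GLConsistent.exists_sat {Γ : Finset Formula} (hΓ : GLConsistent Γ) :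
    ∃ (M : GLModel) (w : M.World), ∀ γ ∈ Γ, M.sat w γ := by
  set S := Γ.biUnion subf
  have hS : ∀ ψ ∈ S, ψ.subf ⊆ S := fun ψ hψ => by
    obtain ⟨γ, hγ, hψγ⟩ := Finset.mem_biUnion.1 hψ
    exact (subf_subset_of_mem hψγ).trans (Finset.subset_biUnion_of_mem subf hγ)
  have hΓS : ∀ γ ∈ Γ, γ ∈ S := fun γ hγ => Finset.mem_biUnion.2 ⟨γ, hγ, mem_subf_self γ⟩
  obtain ⟨X, hXS, hX⟩ := Canonical.lindenbaum (S := S) hΓ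
  let w : Canonical.World S := ⟨X, hXS, hX.anti Finset.subset_union_right⟩
  have : Nonempty (Canonical.World S) := ⟨w⟩
  exact ⟨Canonical.model S, w, fun γ hγ => (Canonical.sat_model_iff hS (hΓS γ hγ) w).2
    (Canonical.mem_of_consistent_union hX hγ (hΓS γ hγ))⟩

theorem GLConsistent.insert_neg_reflAxioms_of_not_glsHilbert {φ : Formula} (hφ : ¬ GLSHilbert φ)
    (A : Finset Formula) : GLConsistent (insert φ.neg (reflAxioms A)) :=
  fun hbot => hφ (.of_glDeriv_reflAxioms (.of_neg_neg (.deduction hbot)))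

/-- Characterization C0: φ is a theorem of GLS iff φ is true at every SF(φ)-reflexive
world of every GL-model. -/
theorem gls_characterization_c0 (φ : Formula) :
    GLSHilbert φ ↔
      ∀ (M : GLModel) (w : M.World), M.reflexiveFor w φ.subf → M.sat w φ := by
  refine ⟨fun h M w hw => h.sat_of_reflexiveFor hw, fun h => ?_⟩
  by_contra hφ
  obtain ⟨M, w, hw⟩ :=
    (GLConsistent.insert_neg_reflAxioms_of_not_glsHilbert hφ (boxInv φ.subf)).exists_sat
  have hrefl : M.reflexiveFor w φ.subf := fun α hα =>
    hw _ (Finset.mem_insert_of_mem (Finset.mem_image_of_mem _ (mem_boxInv.2 hα)))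
  exact hw _ (Finset.mem_insert_self _ _) (h M w hrefl)
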